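/- Let K ⊆ ℝ^n be a closed convex cone, B ∈ ℝ^{n×k} a matrix, and b ∈ (lin(K))^⊥, where lin(K) = K ∩ (−K). Then aff(B⁻¹(K° − b)) ⊆ B⁻¹((lin(K))^⊥) ⊆ B⁻¹(aff(K° − b)), where B⁻¹(S) denotes the preimage of S under y ↦ B y and aff denotes affine hull. -/

import Mathlib

open Matrix Set MeasureTheory
open scoped RealInnerProductSpace

noncomputable section

/-- `E d` is Euclidean space `ℝ^d`. -/
abbrev E (d : ℕ) := EuclideanSpace ℝ (Fin d)

/-- Matrix-vector multiplication as a map between Euclidean spaces. -/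
def mulVecE {m n : ℕ} (B : Matrix (Fin m) (Fin n) ℝ) (y : E n) : E m :=
  Matrix.toEuclideanLin B y

/-- The polar of a set `K`: `K° = {v | ⟪v, w⟫ ≤ 0 for all w ∈ K}`. -/
def polarCone {d : ℕ} (K : Set (E d)) : Set (E d) :=
  {v | ∀ w ∈ K, ⟪v, w⟫ ≤ 0}

/-- The horizon cone of `C`: directions `x` with `w + τ • x ∈ C` for all `w ∈ C`, `τ ≥ 0`. -/
def horizonCone {d : ℕ} (C : Set (E d)) : Set (E d) :=
  {x | ∀ w ∈ C, ∀ τ : ℝ, 0 ≤ τ → w + τ • x ∈ C}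

/-- The null space of a matrix `M`, as a set of vectors. -/
def nullSet {d : ℕ} (M : Matrix (Fin d) (Fin d) ℝ) : Set (E d) :=
  {w | mulVecE M w = 0}

/-- A set is polyhedral if it is of the form `{u | Aᵀ u ≤ a}` (componentwise). -/
def IsPolyhedral {d : ℕ} (U : Set (E d)) : Prop :=
  ∃ (k : ℕ) (A : Matrix (Fin d) (Fin k) ℝ) (a : Fin k → ℝ),
    U = {u | ∀ i, mulVecE Aᵀ u i ≤ a i}

/-- The piecewise linear-quadratic penalty
`θ_{U,M}(w) = sup_{u ∈ U} (⟪u, w⟫ - (1/2) ⟪u, M u⟫)`, valued in `ℝ ∪ {±∞}`. -/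
def theta {m : ℕ} (U : Set (E m)) (M : Matrix (Fin m) (Fin m) ℝ) (w : E m) : EReal :=
  ⨆ u ∈ U, ((⟪u, w⟫ - (1 / 2) * ⟪u, mulVecE M u⟫ : ℝ) : EReal)

/-- `cone U = {t • u | u ∈ U, t ≥ 0}`. -/
def coneOf {d : ℕ} (U : Set (E d)) : Set (E d) :=
  {w | ∃ u ∈ U, ∃ t : ℝ, 0 ≤ t ∧ w = t • u}

/-- A function `ρ : ℝ^n → ℝ ∪ {+∞}` is coercive if `ρ(y) → +∞` as `‖y‖ → ∞`. -/
def Coercive {n : ℕ} (ρ : E n → EReal) : Prop :=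
  ∀ C : ℝ, ∃ R : ℝ, ∀ y : E n, R ≤ ‖y‖ → (C : EReal) ≤ ρ y


/-!
The polar cone is orthogonal to `lin K = span (K ∩ -K)`, and so is `b`; this gives the first
inclusion. Conversely, by the bipolar theorem a vector orthogonal to `K°` lies in `K ∩ -K`, so
`(lin K)ᗮ ⊆ (K°)ᗮᗮ = span K°`. Since `0 ∈ K°`, the span of `K°` is its affine hull, and
translating by `-b` gives the second inclusion.
-/

open Submodule

section Cones

variable {H : Type*} [NormedAddCommGroup H] [InnerProductSpace ℝ H]

lemma Convex.add_mem_of_smul_mem {V : Type*} [AddCommGroup V] [Module ℝ V] {K : Set V}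
    (hconv : Convex ℝ K) (hcone : ∀ t : ℝ, 0 ≤ t → ∀ w ∈ K, t • w ∈ K)
    {x y : V} (hx : x ∈ K) (hy : y ∈ K) : x + y ∈ K := by
  have hmid := hcone 2 zero_le_two _ (hconv hx hy one_half_pos.le one_half_pos.le (add_halves 1))
  rwa [smul_add, smul_smul, smul_smul, mul_one_div_cancel two_ne_zero, one_smul, one_smul]
    at hmid

def ProperCone.ofClosedConvexCone (K : Set H) (hKclosed : IsClosed K)
    (hKconvex : Convex ℝ K) (hKcone : ∀ t : ℝ, 0 ≤ t → ∀ w ∈ K, t • w ∈ K)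
    (hK : K.Nonempty) : ProperCone ℝ H where
  carrier := K
  add_mem' := hKconvex.add_mem_of_smul_mem hKcone
  zero_mem' := by simpa using hKcone 0 le_rfl _ hK.some_mem
  smul_mem' c _ hx := hKcone c c.2 _ hx
  isClosed' := hKclosed

lemma ProperCone.mem_lineality_of_mem_orthogonal_innerDual [CompleteSpace H]
    (C : ProperCone ℝ H) {x : H} (hx : x ∈ (span ℝ (innerDual (C : Set H) : Set H))ᗮ) :
    x ∈ (C : Set H) ∩ -C := by
  have horth : ∀ y ∈ innerDual (C : Set H), ⟪y, x⟫ = 0 := fun y hy =>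
    (mem_orthogonal _ _).1 hx y (subset_span hy)
  rw [← innerDual_innerDual C]
  refine ⟨fun y hy => (horth y hy).ge, fun y hy => ?_⟩
  simp [horth y hy]

lemma ProperCone.orthogonal_span_lineality_le_span_innerDual [FiniteDimensional ℝ H]
    (C : ProperCone ℝ H) :
    (span ℝ ((C : Set H) ∩ -C))ᗮ ≤ span ℝ (innerDual (C : Set H) : Set H) := by
  rw [← orthogonal_orthogonal (span ℝ (innerDual (C : Set H) : Set H))]
  exact orthogonal_le <| fun x hx => subset_span (C.mem_lineality_of_mem_orthogonal_innerDual hx)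

end Cones

section Polar

variable {d : ℕ}

lemma polarCone_eq_neg_innerDual (K : Set (E d)) :
    polarCone K = -(ProperCone.innerDual K : Set (E d)) := by
  ext v
  simp [polarCone, inner_neg_right, real_inner_comm]

lemma zero_mem_polarCone (K : Set (E d)) : (0 : E d) ∈ polarCone K := fun w _ => by simp

lemma polarCone_subset_orthogonal_span_lineality (K : Set (E d)) :
    polarCone K ⊆ ((span ℝ (K ∩ -K))ᗮ : Set (E d)) := by
  refine subset_span.trans (isOrtho_iff_le.1 (isOrtho_span.2 ?_))
  rintro v hv w ⟨hw, hnw⟩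
  exact le_antisymm (hv w hw) (by simpa [inner_neg_right] using hv (-w) hnw)

lemma orthogonal_span_lineality_le_span_polarCone (K : Set (E d)) (hKclosed : IsClosed K)
    (hKconvex : Convex ℝ K) (hKcone : ∀ t : ℝ, 0 ≤ t → ∀ w ∈ K, t • w ∈ K) :
    (span ℝ (K ∩ -K))ᗮ ≤ span ℝ (polarCone K) := by
  rcases K.eq_empty_or_nonempty with rfl | hK
  · simp [polarCone]
  rw [polarCone_eq_neg_innerDual, span_neg]
  exact (ProperCone.ofClosedConvexCone K hKclosed hKconvex hKcone hK)
    |>.orthogonal_span_lineality_le_span_innerDual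

lemma coe_affineSpan_polarCone (K : Set (E d)) :
    (affineSpan ℝ (polarCone K) : Set (E d)) = span ℝ (polarCone K) := by
  rw [← affineSpan_insert_zero, insert_eq_of_mem (zero_mem_polarCone K)]

end Polar

lemma sub_mem_affineSpan_image_sub {R V : Type*} [Ring R] [AddCommGroup V] [Module R V]
    {s : Set V} {x : V} (hx : x ∈ affineSpan R s) (b : V) :
    x - b ∈ affineSpan R ((· - b) '' s) := by
  have := AffineSubspace.vadd_mem_pointwise_vadd_iff (v := -b) |>.2 hx
  rw [AffineSubspace.pointwise_vadd_span, ← Set.image_vadd] at this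
  simpa only [vadd_eq_add, ← sub_eq_neg_add] using this

/-- for a closed convex cone K, a matrix B and b ∈ (lin K)-perp,
aff (B⁻¹(K_polar - b)) ⊆ B⁻¹((lin K)-perp) ⊆ B⁻¹(aff (K_polar - b)). -/
theorem affine_hull_sandwich {n k : ℕ}
    (K : Set (E n)) (hKclosed : IsClosed K) (hKconvex : Convex ℝ K)
    (hKcone : ∀ t : ℝ, 0 ≤ t → ∀ w ∈ K, t • w ∈ K)
    (B : Matrix (Fin n) (Fin k) ℝ) (b : E n)
    (hb : b ∈ ((Submodule.span ℝ (K ∩ -K))ᗮ : Set (E n))) :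
    (affineSpan ℝ (mulVecE B ⁻¹' ((fun v => v - b) '' polarCone K)) : Set (E k)) ⊆
        mulVecE B ⁻¹' ((Submodule.span ℝ (K ∩ -K))ᗮ : Set (E n)) ∧
      mulVecE B ⁻¹' ((Submodule.span ℝ (K ∩ -K))ᗮ : Set (E n)) ⊆
        mulVecE B ⁻¹' ((affineSpan ℝ ((fun v => v - b) '' polarCone K) : Set (E n))) := by
  have hshift : (fun v => v - b) '' polarCone K ⊆ ((span ℝ (K ∩ -K))ᗮ : Set (E n)) := by
    rintro _ ⟨v, hv, rfl⟩
    exact sub_mem (polarCone_subset_orthogonal_span_lineality K hv) hb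
  refine ⟨fun y hy => ?_, fun y hy => ?_⟩
  · have hspan : span ℝ (mulVecE B ⁻¹' ((fun v => v - b) '' polarCone K)) ≤
        (span ℝ (K ∩ -K))ᗮ.comap (toEuclideanLin B) :=
      span_le.2 (preimage_mono hshift)
    exact hspan (affineSpan_subset_span hy)
  · have hy' : mulVecE B y + b ∈ affineSpan ℝ (polarCone K) := by
      rw [← SetLike.mem_coe, coe_affineSpan_polarCone]
      exact orthogonal_span_lineality_le_span_polarCone K hKclosed hKconvex hKcone (add_mem hy hb)
    simpa only [add_sub_cancel_right, mem_preimage, SetLike.mem_coe]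
      using sub_mem_affineSpan_image_sub hy' b
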